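/- For every σ ∈ S_n, Σ_{w ∈ R(σ)} d_B^{G(σ)}(w) = Σ_{i ∈ Des(σ)} Σ_{u ∈ R(σ·s_i)} d_B^{G(σ·s_i)}(u) + 2·Σ_{i : i, i+1 ∈ Des(σ)} |R(σ·s_i·s_{i+1}·s_i)|, where on the right-hand side d_B^{G(σ·s_i)}(u) is the braid degree of u computed in the graph G(σ·s_i). -/

import Mathlib

namespace RW

/-- The simple transposition `s i = (i, i+1)`, acting on `ℕ` (points are `1, …, n`;
the point `0` is unused, matching the paper's 1-indexed conventions). -/
def s (i : ℕ) : Equiv.Perm ℕ := Equiv.swap i (i + 1)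

/-- The product `s i₁ * s i₂ * ⋯ * s iₗ` of the word `w = [i₁, …, iₗ]`. -/
def π (w : List ℕ) : Equiv.Perm ℕ := (w.map s).prod

/-- The copy of the symmetric group `S_n` inside `Equiv.Perm ℕ`: permutations of
`{1, …, n}`, i.e. fixing `0` and every point `> n`. -/
def Sn (n : ℕ) : Set (Equiv.Perm ℕ) := {σ | ∀ m : ℕ, (m = 0 ∨ n < m) → σ m = m}

/-- The length `ℓ(σ)`: the number of inversions of `σ`. -/
noncomputable def len (σ : Equiv.Perm ℕ) : ℕ :=
  Nat.card {p : ℕ × ℕ // p.1 < p.2 ∧ σ p.2 < σ p.1}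

/-- `w` is a reduced word for `σ`: its product is `σ` and its length is `ℓ(σ)`. -/
def Reduced (σ : Equiv.Perm ℕ) (w : List ℕ) : Prop :=
  π w = σ ∧ w.length = len σ

/-- `R σ`: the set of reduced words of `σ`. -/
def R (σ : Equiv.Perm ℕ) : Set (List ℕ) := {w | Reduced σ w}

/-- The descent set `Des σ = {i ≥ 1 | σ(i) > σ(i+1)}`. -/
def Des (σ : Equiv.Perm ℕ) : Set ℕ := {i | 1 ≤ i ∧ σ (i + 1) < σ i}

/-- A single commutation move: swap two adjacent letters `a, b` with `|a - b| > 1`. -/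
def CommMove (w w' : List ℕ) : Prop :=
  ∃ u v : List ℕ, ∃ a b : ℕ, 1 < ((a : ℤ) - (b : ℤ)).natAbs ∧
    w = u ++ a :: b :: v ∧ w' = u ++ b :: a :: v

/-- A single braid move: replace consecutive letters `(a, a+1, a)` by `(a+1, a, a+1)`
or vice versa. -/
def BraidMove (w w' : List ℕ) : Prop :=
  ∃ u v : List ℕ, ∃ a : ℕ,
    (w = u ++ a :: (a+1) :: a :: v ∧ w' = u ++ (a+1) :: a :: (a+1) :: v) ∨
    (w = u ++ (a+1) :: a :: (a+1) :: v ∧ w' = u ++ a :: (a+1) :: a :: v)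

/-- The braid degree of a word: the number of words obtainable from it by a single
braid move.  (For `w ∈ R σ` these are exactly the braid-edge neighbours of `w` in
`G(σ)`, since a braid move sends reduced words of `σ` to reduced words of `σ`.) -/
noncomputable def dB (w : List ℕ) : ℕ := Nat.card {w' : List ℕ // BraidMove w w'}

/-- The commutation degree of a word: the number of words obtainable from it by a
single commutation move. -/
noncomputable def dC (w : List ℕ) : ℕ := Nat.card {w' : List ℕ // CommMove w w'}

/-- The number `|B(σ)|` of braid classes: classes of `R σ` under the equivalence
generated by single braid moves. -/
noncomputable def nB (σ : Equiv.Perm ℕ) : ℕ :=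
  Nat.card (Quot (fun w w' : R σ => BraidMove w.1 w'.1))

/-- The number `|C(σ)|` of commutation classes. -/
noncomputable def nC (σ : Equiv.Perm ℕ) : ℕ :=
  Nat.card (Quot (fun w w' : R σ => CommMove w.1 w'.1))

/-- The underlying function of `w₀^{(k,i)}`: reverse the interval `{i, …, i+k-1}`. -/
def w0fun (k i : ℕ) : ℕ → ℕ := fun m => if i ≤ m ∧ m < i + k then i + (i + k - 1) - m else m

theorem w0fun_involutive (k i : ℕ) : Function.Involutive (w0fun k i) := by
  intro m
  unfold w0fun
  split_ifs <;> omega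

/-- `w₀^{(k,i)}`: the permutation fixing every point outside `{i, …, i+k-1}` and
reversing that interval. -/
def w0 (k i : ℕ) : Equiv.Perm ℕ := (w0fun_involutive k i).toPerm

/-- Right weak order: `τ ≤ σ` iff `ℓ(τ) + ℓ(τ⁻¹σ) = ℓ(σ)`. -/
def wle (τ σ : Equiv.Perm ℕ) : Prop := len τ + len (τ⁻¹ * σ) = len σ

/-- The support of `σ`: the letters appearing in some reduced word of `σ`. -/
def supp (σ : Equiv.Perm ℕ) : Set ℕ := {a | ∃ w, Reduced σ w ∧ a ∈ w}

/-!
A nonempty reduced word of `σ` ends in a descent `i`, and what precedes it is a reduced word of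
`σ sᵢ`; so `R σ` is the disjoint union over `i ∈ Des σ` of the words `u ++ [i]`, `u ∈ R (σ sᵢ)`.
A braid move of `u ++ [i]` either takes place inside `u`, or it rewrites the last three letters,
which is possible exactly when `u` ends in `[i, i + 1]` or in `[i, i - 1]`. Peeling two more
letters, the reduced words of `σ sᵢ` ending in `[i, i ± 1]` are the reduced words of
`σ sᵢ s_{i±1} sᵢ` followed by that suffix, and they exist only when `i ± 1` is a descent of `σ`
too. A pair of adjacent descents `j, j + 1` is therefore met twice, from `i = j` and from
`i = j + 1`, and by the braid relation both times with the permutation `σ s_j s_{j+1} s_j`.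
-/

lemma s_apply (i m : ℕ) : s i m = if m = i then i + 1 else if m = i + 1 then i else m := by
  simp only [s, Equiv.swap_apply_def]

lemma s_mul_self (i : ℕ) : s i * s i = 1 := Equiv.swap_mul_self _ _

lemma mul_s_mul_s (σ : Equiv.Perm ℕ) (i : ℕ) : σ * s i * s i = σ := by
  rw [mul_assoc, s_mul_self, mul_one]

lemma s_apply_s_apply (i m : ℕ) : s i (s i m) = m := Equiv.swap_apply_self _ _ _

lemma s_braid (a : ℕ) : s (a + 1) * s a * s (a + 1) = s a * s (a + 1) * s a := by
  ext m
  simp only [Equiv.Perm.mul_apply, s_apply]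
  split_ifs <;> omega

lemma π_append_singleton (w : List ℕ) (a : ℕ) : π (w ++ [a]) = π w * s a := by
  simp [π]

def inversions (σ : Equiv.Perm ℕ) : Set (ℕ × ℕ) := {p | p.1 < p.2 ∧ σ p.2 < σ p.1}

lemma len_eq_ncard_inversions (σ : Equiv.Perm ℕ) : len σ = (inversions σ).ncard :=
  Nat.card_coe_set_eq _

lemma inversions_one : inversions 1 = ∅ := by
  ext p
  simp only [inversions, Equiv.Perm.one_apply, Set.mem_ofPred_eq, Set.mem_empty_iff_false,
    iff_false]
  omega

lemma inversions_mul_s_of_lt {σ : Equiv.Perm ℕ} {i : ℕ} (h : σ i < σ (i + 1)) :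
    inversions (σ * s i) = insert (i, i + 1) (Prod.map (s i) (s i) ⁻¹' inversions σ) := by
  ext ⟨p, q⟩
  simp only [inversions, Set.mem_insert_iff, Set.mem_preimage, Prod.map, Set.mem_ofPred_eq,
    Prod.mk.injEq, Equiv.Perm.mul_apply]
  rw [s_apply, s_apply]
  split_ifs <;> subst_vars <;> omega

lemma mul_s_apply_lt_of_gt {σ : Equiv.Perm ℕ} {i : ℕ} (h : σ (i + 1) < σ i) :
    (σ * s i) i < (σ * s i) (i + 1) := by
  simpa [s_apply] using h

lemma inversions_finite_mul_s {σ : Equiv.Perm ℕ} (hf : (inversions σ).Finite) (i : ℕ) :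
    (inversions (σ * s i)).Finite := by
  have hinj : Function.Injective (Prod.map (s i) (s i)) := (s i).injective.prodMap (s i).injective
  rcases lt_trichotomy (σ i) (σ (i + 1)) with h | h | h
  · rw [inversions_mul_s_of_lt h]
    exact (hf.preimage hinj.injOn).insert _
  · exact absurd (σ.injective h) (by omega)
  · have hσ := inversions_mul_s_of_lt (mul_s_apply_lt_of_gt h)
    rw [mul_s_mul_s] at hσ
    have hpre : (Prod.map (s i) (s i) ⁻¹' inversions (σ * s i)).Finite :=
      hf.subset (hσ ▸ Set.subset_insert _ _)
    simpa [Set.preimage_preimage, Prod.map, s_apply_s_apply] using hpre.preimage hinj.injOn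

-- `len` is a `Nat.card`, which is `0` on infinite sets: length identities need finiteness.
lemma len_mul_s_of_lt {σ : Equiv.Perm ℕ} {i : ℕ} (hf : (inversions σ).Finite)
    (h : σ i < σ (i + 1)) : len (σ * s i) = len σ + 1 := by
  have hbij : Function.Bijective (Prod.map (s i) (s i)) :=
    (s i).bijective.prodMap (s i).bijective
  rw [len_eq_ncard_inversions, len_eq_ncard_inversions, inversions_mul_s_of_lt h,
    Set.ncard_insert_of_notMem _ (hf.preimage hbij.1.injOn),
    Set.ncard_preimage_of_injective_subset_range hbij.1 (by simp [hbij.2.range_eq])]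
  simp [inversions, s_apply]

lemma len_mul_s_of_gt {σ : Equiv.Perm ℕ} {i : ℕ} (hf : (inversions σ).Finite)
    (h : σ (i + 1) < σ i) : len (σ * s i) + 1 = len σ := by
  simpa [mul_s_mul_s] using
    (len_mul_s_of_lt (inversions_finite_mul_s hf i) (mul_s_apply_lt_of_gt h)).symm

lemma inversions_π_finite (w : List ℕ) : (inversions (π w)).Finite := by
  induction w using List.reverseRecOn with
  | nil => simp [π, inversions_one]
  | append_singleton u a ih => rw [π_append_singleton]; exact inversions_finite_mul_s ih a

lemma len_π_le (w : List ℕ) : len (π w) ≤ w.length := by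
  induction w using List.reverseRecOn with
  | nil => simp [π, len_eq_ncard_inversions, inversions_one]
  | append_singleton u a ih =>
    have hf := inversions_π_finite u
    rw [π_append_singleton, List.length_append, List.length_singleton]
    rcases lt_trichotomy (π u a) (π u (a + 1)) with h | h | h
    · rw [len_mul_s_of_lt hf h]; omega
    · exact absurd ((π u).injective h) (by omega)
    · have := len_mul_s_of_gt hf h; omega

lemma reduced_append_singleton_iff {σ : Equiv.Perm ℕ} {u : List ℕ} {i : ℕ} :
    Reduced σ (u ++ [i]) ↔ σ (i + 1) < σ i ∧ Reduced (σ * s i) u := by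
  constructor
  · rintro ⟨hπ, hlen⟩
    have hu : π u = σ * s i := by rw [← hπ, π_append_singleton, mul_s_mul_s]
    have hf : (inversions σ).Finite := hπ ▸ inversions_π_finite _
    have hle := len_π_le u
    rw [hu] at hle
    rw [List.length_append, List.length_singleton] at hlen
    have hdesc : σ (i + 1) < σ i := by
      rcases lt_trichotomy (σ i) (σ (i + 1)) with h | h | h
      · have := len_mul_s_of_lt hf h; omega
      · exact absurd (σ.injective h) (by omega)
      · exact h
    exact ⟨hdesc, hu, by have := len_mul_s_of_gt hf hdesc; omega⟩
  · rintro ⟨hdesc, hπ, hlen⟩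
    have hf := inversions_finite_mul_s (inversions_π_finite u) i
    rw [hπ, mul_s_mul_s] at hf
    refine ⟨by rw [π_append_singleton, hπ, mul_s_mul_s], ?_⟩
    have := len_mul_s_of_gt hf hdesc
    simp only [List.length_append, List.length_singleton]
    omega

lemma reduced_append_pair_iff {τ : Equiv.Perm ℕ} {v : List ℕ} {a b : ℕ} :
    Reduced τ (v ++ [a, b]) ↔
      τ (b + 1) < τ b ∧ (τ * s b) (a + 1) < (τ * s b) a ∧ Reduced (τ * s b * s a) v := by
  rw [show v ++ [a, b] = v ++ [a] ++ [b] by simp, reduced_append_singleton_iff,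
    reduced_append_singleton_iff]

lemma mem_Des_iff {σ : Equiv.Perm ℕ} (h0 : σ 0 = 0) {i : ℕ} : i ∈ Des σ ↔ σ (i + 1) < σ i := by
  refine ⟨And.right, fun h => ⟨Nat.one_le_iff_ne_zero.2 ?_, h⟩⟩
  rintro rfl
  rw [h0] at h
  exact Nat.not_lt_zero _ h

lemma R_diff_nil_eq_biUnion {σ : Equiv.Perm ℕ} (h0 : σ 0 = 0) :
    R σ \ {[]} = ⋃ i ∈ Des σ, (· ++ [i]) '' R (σ * s i) := by
  ext w
  simp only [Set.mem_sdiff, Set.mem_singleton_iff, Set.mem_iUnion, Set.mem_image, exists_prop]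
  rcases w.eq_nil_or_concat with rfl | ⟨u, i, rfl⟩
  · simp
  · simp only [List.concat_eq_append, R, Set.mem_ofPred_eq, reduced_append_singleton_iff,
      mem_Des_iff h0, List.append_ne_nil_of_right_ne_nil _ (List.cons_ne_nil _ _),
      not_false_eq_true, and_true]
    constructor
    · rintro ⟨hi, hu⟩
      exact ⟨i, hi, u, hu, rfl⟩
    · rintro ⟨j, hj, v, hv, heq⟩
      obtain ⟨rfl, hji⟩ := List.append_inj' heq rfl
      obtain rfl : j = i := by simpa using hji
      exact ⟨hj, hv⟩

lemma finite_setOf_length_eq_of_forall_mem {α : Type*} {S : Set α} (hS : S.Finite) (k : ℕ) :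
    {l : List α | l.length = k ∧ ∀ a ∈ l, a ∈ S}.Finite := by
  have := hS.to_subtype
  refine ((List.finite_length_eq S k).image (List.map Subtype.val)).subset ?_
  rintro l ⟨hl, hS⟩
  lift l to List S using hS
  exact ⟨l, by simpa using hl, rfl⟩

section Sn

variable {n : ℕ} {σ : Equiv.Perm ℕ}

lemma lt_of_mem_Des (hσ : σ ∈ Sn n) {i : ℕ} (hi : i ∈ Des σ) : i < n := by
  by_contra! hni
  obtain ⟨-, hdesc⟩ := hi
  have hfix : σ (i + 1) = i + 1 := hσ _ (Or.inr (by omega))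
  have hσi : σ (σ i) = σ i := hσ _ (Or.inr (by omega))
  have := σ.injective hσi
  omega

lemma mul_s_mem_Sn (hσ : σ ∈ Sn n) {i : ℕ} (hi : i ∈ Des σ) : σ * s i ∈ Sn n := by
  have := lt_of_mem_Des hσ hi
  have := hi.1
  intro m hm
  rw [Equiv.Perm.mul_apply, s_apply, if_neg (by omega), if_neg (by omega)]
  exact hσ m hm

lemma finite_Des (hσ : σ ∈ Sn n) : (Des σ).Finite :=
  (Set.finite_Iio n).subset fun _ hi => lt_of_mem_Des hσ hi

lemma lt_of_mem_reduced {w : List ℕ} (hσ : σ ∈ Sn n) (hw : Reduced σ w) : ∀ a ∈ w, a < n := by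
  induction w using List.reverseRecOn generalizing σ with
  | nil => simp
  | append_singleton u i ih =>
    obtain ⟨hdesc, hu⟩ := reduced_append_singleton_iff.1 hw
    have hi : i ∈ Des σ := (mem_Des_iff (hσ 0 (Or.inl rfl))).2 hdesc
    simp only [List.mem_append, List.mem_singleton]
    rintro a (ha | rfl)
    · exact ih (mul_s_mem_Sn hσ hi) hu a ha
    · exact lt_of_mem_Des hσ hi

lemma finite_R (hσ : σ ∈ Sn n) : (R σ).Finite :=
  (finite_setOf_length_eq_of_forall_mem (Set.finite_Iio n) (len σ)).subset
    fun _ hw => ⟨hw.2, lt_of_mem_reduced hσ hw⟩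

end Sn

lemma braidMove_iff {w w' : List ℕ} :
    BraidMove w w' ↔ ∃ u v : List ℕ, ∃ a b : ℕ, (b = a + 1 ∨ a = b + 1) ∧
      w = u ++ a :: b :: a :: v ∧ w' = u ++ b :: a :: b :: v := by
  constructor
  · rintro ⟨u, v, a, ⟨rfl, rfl⟩ | ⟨rfl, rfl⟩⟩
    exacts [⟨u, v, a, a + 1, Or.inl rfl, rfl, rfl⟩, ⟨u, v, a + 1, a, Or.inr rfl, rfl, rfl⟩]
  · rintro ⟨u, v, a, b, rfl | rfl, rfl, rfl⟩
    exacts [⟨u, v, a, Or.inl ⟨rfl, rfl⟩⟩, ⟨u, v, b, Or.inr ⟨rfl, rfl⟩⟩]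

lemma finite_setOf_braidMove (w : List ℕ) : {w' | BraidMove w w'}.Finite := by
  refine (finite_setOf_length_eq_of_forall_mem w.finite_toSet w.length).subset ?_
  rintro w' hw'
  obtain ⟨u, v, a, b, -, rfl, rfl⟩ := braidMove_iff.1 hw'
  refine ⟨by simp, fun x hx => ?_⟩
  simp only [List.mem_append, List.mem_cons] at hx
  simp only [Set.mem_ofPred_eq, List.mem_append, List.mem_cons]
  tauto

lemma braidMove_append_singleton_iff {u w' : List ℕ} {i : ℕ} (hi : 0 < i) :
    BraidMove (u ++ [i]) w' ↔ (∃ u', BraidMove u u' ∧ w' = u' ++ [i]) ∨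
      (∃ v, v ++ [i, i + 1] = u ∧ w' = v ++ [i + 1, i, i + 1]) ∨
      (∃ v, v ++ [i, i - 1] = u ∧ w' = v ++ [i - 1, i, i - 1]) := by
  simp only [braidMove_iff]
  constructor
  · rintro ⟨p, q, a, b, hab, h, rfl⟩
    rcases q.eq_nil_or_concat with rfl | ⟨q, c, rfl⟩
    · obtain ⟨rfl, hia⟩ := List.append_inj' (h.trans (by simp : _ = p ++ [a, b] ++ [a])) rfl
      obtain rfl : i = a := by simpa using hia
      rcases hab with rfl | rfl
      · exact Or.inr (Or.inl ⟨p, rfl, by simp⟩)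
      · exact Or.inr (Or.inr ⟨p, by simp, by simp⟩)
    · obtain ⟨rfl, hic⟩ := List.append_inj'
        (h.trans (by simp : _ = p ++ a :: b :: a :: q ++ [c])) rfl
      obtain rfl : i = c := by simpa using hic
      exact Or.inl ⟨_, ⟨p, q, a, b, hab, rfl, rfl⟩, by simp⟩
  · rintro (⟨u', ⟨p, q, a, b, hab, rfl, rfl⟩, rfl⟩ | ⟨v, rfl, rfl⟩ | ⟨v, rfl, rfl⟩)
    · exact ⟨p, q ++ [i], a, b, hab, by simp, by simp⟩
    · exact ⟨v, [], i, i + 1, Or.inl rfl, by simp, by simp⟩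
    · exact ⟨v, [], i, i - 1, Or.inr (by omega), by simp, by simp⟩

lemma setOf_braidMove_append_singleton {u : List ℕ} {i : ℕ} (hi : 0 < i) :
    {w' | BraidMove (u ++ [i]) w'} =
      (· ++ [i]) '' {u' | BraidMove u u'} ∪
        (· ++ [i + 1, i, i + 1]) '' {v | v ++ [i, i + 1] = u} ∪
        (· ++ [i - 1, i, i - 1]) '' {v | v ++ [i, i - 1] = u} := by
  ext w'
  simp only [Set.mem_ofPred_eq, Set.mem_union, Set.mem_image, braidMove_append_singleton_iff hi]
  simp only [eq_comm (a := w'), or_assoc]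

lemma ncard_setOf_append_eq {α : Type*} [DecidableEq α] (l u : List α) :
    {v | v ++ l = u}.ncard = if l <:+ u then 1 else 0 := by
  split_ifs with h
  · obtain ⟨v, rfl⟩ := h
    exact Set.ncard_eq_one.2 ⟨v, by ext; simp⟩
  · have hempty : {v | v ++ l = u} = ∅ := Set.eq_empty_of_forall_notMem fun v hv => h ⟨v, hv⟩
    rw [hempty, Set.ncard_empty]

lemma disjoint_image_append {α : Type*} {l l' : List α} (hl : l ≠ []) (hl' : l' ≠ [])
    (h : l.getLast hl ≠ l'.getLast hl') (S S' : Set (List α)) :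
    Disjoint ((· ++ l) '' S) ((· ++ l') '' S') := by
  rw [Set.disjoint_left]
  rintro _ ⟨x, -, rfl⟩ ⟨y, -, hxy⟩
  have := congrArg List.getLast? hxy
  simp [List.getLast?_append, List.getLast?_eq_some_getLast hl,
    List.getLast?_eq_some_getLast hl'] at this
  exact h this.symm

lemma dB_eq_ncard (w : List ℕ) : dB w = {w' | BraidMove w w'}.ncard := Nat.card_coe_set_eq _

lemma dB_nil : dB [] = 0 := by
  rw [dB_eq_ncard, Set.ncard_eq_zero (finite_setOf_braidMove [])]
  refine Set.eq_empty_of_forall_notMem fun w' hw' => ?_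
  obtain ⟨u, v, a, b, -, h, -⟩ := braidMove_iff.1 hw'
  simp at h

lemma dB_append_singleton (u : List ℕ) {i : ℕ} (hi : 0 < i) :
    dB (u ++ [i]) = dB u + (if [i, i + 1] <:+ u then 1 else 0) +
      (if [i, i - 1] <:+ u then 1 else 0) := by
  have hfin : ∀ l : List ℕ, ({v | v ++ l = u}).Finite := fun l =>
    Set.Subsingleton.finite fun v hv v' hv' => List.append_cancel_right (hv.trans hv'.symm)
  rw [dB_eq_ncard, dB_eq_ncard, setOf_braidMove_append_singleton hi,
    Set.ncard_union_eq
      (Disjoint.union_left (disjoint_image_append (by simp) (by simp) (by simp; omega) _ _)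
        (disjoint_image_append (by simp) (by simp) (by simp; omega) _ _))
      (((finite_setOf_braidMove u).image _).union ((hfin _).image _)) ((hfin _).image _),
    Set.ncard_union_eq (disjoint_image_append (by simp) (by simp) (by simp) _ _)
      ((finite_setOf_braidMove u).image _) ((hfin _).image _)]
  simp only [Set.ncard_image_of_injective _ (List.append_left_injective _), ncard_setOf_append_eq]

lemma finsum_mem_ite_eq {α M : Type*} [AddCommMonoid M] (S : Set α) (p : α → Prop)
    [DecidablePred p] (f : α → M) :
    ∑ᶠ i ∈ S, (if p i then f i else 0) = ∑ᶠ i ∈ S ∩ {i | p i}, f i := by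
  rw [finsum_mem_def, finsum_mem_def]
  congr 1
  ext i
  by_cases hS : i ∈ S <;> by_cases hp : p i <;> simp [Set.indicator, hS, hp]

lemma finsum_mem_eq_finsum_mem_succ {M : Type*} [AddCommMonoid M] {D : Set ℕ} (hD : 0 ∉ D)
    (f : ℕ → M) : ∑ᶠ i ∈ D, f i = ∑ᶠ j ∈ {j | j + 1 ∈ D}, f (j + 1) := by
  have hD' : D = (· + 1) '' {j | j + 1 ∈ D} := by
    ext (_ | j)
    · simp [hD]
    · simp
  conv_lhs => rw [hD']
  exact finsum_mem_image (add_left_injective 1).injOn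

lemma ncard_reduced_suffix (τ : Equiv.Perm ℕ) (a b : ℕ) :
    {u ∈ R τ | [a, b] <:+ u}.ncard =
      if τ (b + 1) < τ b ∧ (τ * s b) (a + 1) < (τ * s b) a then Nat.card (R (τ * s b * s a))
      else 0 := by
  have himage : {u ∈ R τ | [a, b] <:+ u} = (· ++ [a, b]) '' {v | Reduced τ (v ++ [a, b])} := by
    ext u
    constructor
    · rintro ⟨hu, v, rfl⟩
      exact ⟨v, hu, rfl⟩
    · rintro ⟨v, hv, rfl⟩
      exact ⟨hv, v, rfl⟩
  rw [himage, Set.ncard_image_of_injective _ (List.append_left_injective _)]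
  simp only [reduced_append_pair_iff]
  split_ifs with h
  · simp only [h, true_and]
    exact (Nat.card_coe_set_eq _).symm
  · simp only [← and_assoc, h, false_and, Set.ofPred_false, Set.ncard_empty]

lemma finsum_mem_R_eq {M : Type*} [AddCommMonoid M] {n : ℕ} {σ : Equiv.Perm ℕ} (hσ : σ ∈ Sn n)
    {f : List ℕ → M} (hf : f [] = 0) :
    ∑ᶠ w ∈ R σ, f w = ∑ᶠ i ∈ Des σ, ∑ᶠ u ∈ R (σ * s i), f (u ++ [i]) := by
  have hdisj : (Des σ).PairwiseDisjoint fun i => (· ++ [i]) '' R (σ * s i) :=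
    fun i _ j _ hij => disjoint_image_append (List.cons_ne_nil _ _) (List.cons_ne_nil _ _)
      (by simpa using hij) _ _
  rw [← finsum_mem_insert_zero hf, ← Set.insert_sdiff_singleton, finsum_mem_insert_zero hf,
    R_diff_nil_eq_biUnion (hσ 0 (Or.inl rfl)),
    finsum_mem_biUnion hdisj (finite_Des hσ) fun i hi => (finite_R (mul_s_mem_Sn hσ hi)).image _]
  exact finsum_mem_congr rfl fun i _ => finsum_mem_image (List.append_left_injective _).injOn

lemma finsum_dB_append_singleton {S : Set (List ℕ)} (hS : S.Finite) {i : ℕ} (hi : 0 < i) :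
    ∑ᶠ u ∈ S, dB (u ++ [i]) =
      ∑ᶠ u ∈ S, dB u + {u ∈ S | [i, i + 1] <:+ u}.ncard + {u ∈ S | [i, i - 1] <:+ u}.ncard := by
  rw [finsum_mem_congr rfl fun u _ => dB_append_singleton u hi, finsum_mem_add_distrib hS,
    finsum_mem_add_distrib hS, finsum_mem_ite_eq, finsum_mem_ite_eq, finsum_one, finsum_one]
  rfl

lemma finsum_mem_Des_ncard_suffix_succ (σ : Equiv.Perm ℕ) :
    ∑ᶠ i ∈ Des σ, {u ∈ R (σ * s i) | [i, i + 1] <:+ u}.ncard =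
      ∑ᶠ i ∈ {i : ℕ | i ∈ Des σ ∧ i + 1 ∈ Des σ}, Nat.card (R (σ * s i * s (i + 1) * s i)) := by
  classical
  refine (finsum_mem_congr rfl fun i hi => ?_).trans (finsum_mem_ite_eq (Des σ) (· + 1 ∈ Des σ) _)
  rw [ncard_reduced_suffix]
  refine if_congr ?_ rfl rfl
  have := hi.2
  simp (disch := omega) only [Des, Equiv.Perm.mul_apply, s, Equiv.swap_apply_left,
    Equiv.swap_apply_right, Equiv.swap_apply_of_ne_of_ne, Set.mem_ofPred_eq]
  omega

lemma finsum_mem_Des_ncard_suffix_pred {σ : Equiv.Perm ℕ} (h0 : σ 0 = 0) :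
    ∑ᶠ i ∈ Des σ, {u ∈ R (σ * s i) | [i, i - 1] <:+ u}.ncard =
      ∑ᶠ i ∈ {i : ℕ | i ∈ Des σ ∧ i + 1 ∈ Des σ}, Nat.card (R (σ * s i * s (i + 1) * s i)) := by
  classical
  rw [finsum_mem_eq_finsum_mem_succ (fun h => Nat.lt_irrefl 0 h.1)]
  refine (finsum_mem_congr rfl fun j hj => ?_).trans
    ((finsum_mem_ite_eq {j | j + 1 ∈ Des σ} (· ∈ Des σ) _).trans (by rw [Set.inter_comm]; rfl))
  have hbraid : σ * s (j + 1) * s j * s (j + 1) = σ * s j * s (j + 1) * s j := by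
    rw [mul_assoc, mul_assoc, ← mul_assoc (s (j + 1)), s_braid]
    simp only [mul_assoc]
  rw [Nat.add_sub_cancel, ncard_reduced_suffix, hbraid]
  refine if_congr ?_ rfl rfl
  have := hj.2
  simp (disch := omega) only [mem_Des_iff h0, Equiv.Perm.mul_apply, s, Equiv.swap_apply_left,
    Equiv.swap_apply_right, Equiv.swap_apply_of_ne_of_ne]
  omega

/-- recursion for the total braid degree:
`Σ_{w ∈ R σ} d_B^{G(σ)}(w) = Σ_{i ∈ Des σ} Σ_{u ∈ R(σ s_i)} d_B^{G(σ s_i)}(u)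
+ 2 Σ_{i, i+1 ∈ Des σ} |R(σ s_i s_{i+1} s_i)|`.  (A braid move sends reduced words
of `τ` to reduced words of `τ`, so `dB` computes the braid degree both in `G(σ)`
and in each `G(σ s_i)`.) -/
theorem statement_3 (n : ℕ) (σ : Equiv.Perm ℕ) (hσ : σ ∈ Sn n) :
    ∑ᶠ w ∈ R σ, dB w =
      (∑ᶠ i ∈ Des σ, ∑ᶠ u ∈ R (σ * s i), dB u) +
      2 * ∑ᶠ i ∈ {i : ℕ | i ∈ Des σ ∧ i + 1 ∈ Des σ},
            Nat.card (R (σ * s i * s (i + 1) * s i)) := by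
  calc ∑ᶠ w ∈ R σ, dB w
      = ∑ᶠ i ∈ Des σ, ∑ᶠ u ∈ R (σ * s i), dB (u ++ [i]) := finsum_mem_R_eq hσ dB_nil
    _ = ∑ᶠ i ∈ Des σ, (∑ᶠ u ∈ R (σ * s i), dB u + {u ∈ R (σ * s i) | [i, i + 1] <:+ u}.ncard +
          {u ∈ R (σ * s i) | [i, i - 1] <:+ u}.ncard) :=
        finsum_mem_congr rfl fun i hi =>
          finsum_dB_append_singleton (finite_R (mul_s_mem_Sn hσ hi)) hi.1
    _ = _ := by
      rw [finsum_mem_add_distrib (finite_Des hσ), finsum_mem_add_distrib (finite_Des hσ),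
        finsum_mem_Des_ncard_suffix_succ, finsum_mem_Des_ncard_suffix_pred (hσ 0 (Or.inl rfl))]
      ring

end RW
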